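/- arXiv:1605.00800 — 3 statements merged into one kernel-verified Lean document; each statement's English description precedes it below -/
import Mathlib

section
/- For each i = 1,…,s−1, the roots corresponding to the antidiagonal entries of the superdiagonal block X_{i,i+1} (from the lower left entry towards the upper right) belong to the base S; explicitly, with R_k = r_1 + … + r_k, the roots (R_i − t, R_i + 1 + t) for 0 ≤ t < min(r_i, r_{i+1}) all lie in S. -/
open scoped Matrix Classical
open MvPolynomial

/-- `Rsum r k = r 0 + ⋯ + r (k-1)`, the partial sum `R_k` of block sizes. -/
def Rsum (r : ℕ → ℕ) (k : ℕ) : ℕ := (Finset.range k).sum r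

/-- Index of the diagonal block containing row/column `a` (0-indexed). -/
def blockOf (r : ℕ → ℕ) (s a : ℕ) : ℕ :=
  ((Finset.range s).filter fun k => Rsum r (k + 1) ≤ a).card

/-- The set `M` of roots `(i,j)` of the nilradical `m`. -/
def Mset (r : ℕ → ℕ) (s n : ℕ) : Finset (Fin n × Fin n) :=
  Finset.univ.filter fun p => blockOf r s (p.1 : ℕ) < blockOf r s (p.2 : ℕ)

/-- `γ' > γ` iff `γ' − γ` is a positive root. -/
def rootGt {n : ℕ} (γ' γ : Fin n × Fin n) : Prop :=
  (γ'.1 = γ.1 ∧ γ.2 < γ'.2) ∨ (γ'.2 = γ.2 ∧ γ'.1 < γ.1)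

/-- A base `S` of `M`: pairwise incomparable, and every root of `M ∖ S`
exceeds some element of `S`. -/
def IsBase {n : ℕ} (M S : Finset (Fin n × Fin n)) : Prop :=
  S ⊆ M ∧
  (∀ ξ ∈ S, ∀ η ∈ S, ξ ≠ η → ¬rootGt ξ η ∧ ¬rootGt η ξ) ∧
  (∀ γ ∈ M, γ ∉ S → ∃ ξ ∈ S, rootGt γ ξ)

/-- `p` is a positive root of the reductive (block-diagonal) part `r`. -/
def inDr (r : ℕ → ℕ) (s : ℕ) {n : ℕ} (p : Fin n × Fin n) : Prop :=
  p.1 < p.2 ∧ blockOf r s (p.1 : ℕ) = blockOf r s (p.2 : ℕ)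

/-- The coordinate ring `K[m]`: polynomials in the variables `x_ξ`, `ξ ∈ M`. -/
abbrev Rpoly (K : Type) [Field K] (r : ℕ → ℕ) (s n : ℕ) : Type :=
  MvPolynomial {p : Fin n × Fin n // p ∈ Mset r s n} K

/-- The formal matrix `𝕏` of variables (zero outside `M`). -/
noncomputable def Xmat (K : Type) [Field K] (r : ℕ → ℕ) (s n : ℕ) :
    Matrix (Fin n) (Fin n) (Rpoly K r s n) :=
  Matrix.of fun i j => if h : (i, j) ∈ Mset r s n then MvPolynomial.X ⟨(i, j), h⟩ else 0

/-- The minor of a matrix on the ordered row set `I` and ordered column set `J`. -/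
noncomputable def minorDet {n : ℕ} {A : Type} [CommRing A]
    (X : Matrix (Fin n) (Fin n) A) (I J : Finset (Fin n)) : A :=
  if h : J.card = I.card then
    Matrix.det (Matrix.of fun p q : Fin I.card =>
      X (I.orderIsoOfFin rfl p).1 (J.orderIsoOfFin h q).1)
  else 0

/-- The minor `M_γ` attached to a root `γ = (a,b)`: rows `ord{a, i₁, …, i_k}`,
columns `ord{j₁, …, j_k, b}`, where `S_γ = {(i,j) ∈ S : i > a, j < b}`. -/
noncomputable def Mminor (K : Type) [Field K] (r : ℕ → ℕ) (s n : ℕ)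
    (S : Finset (Fin n × Fin n)) (γ : Fin n × Fin n) : Rpoly K r s n :=
  minorDet (Xmat K r s n)
    (insert γ.1 ((S.filter fun p => γ.1 < p.1 ∧ p.2 < γ.2).image Prod.fst))
    (insert γ.2 ((S.filter fun p => γ.1 < p.1 ∧ p.2 < γ.2).image Prod.snd))

/-- The polynomial `L_{φ_q}` for an admissible pair `q = (ξ, ξ')`:
`Σ_{α₁+α₂=α_q, α₁,α₂ ∈ Δ⁺_r ∪ {0}} M_{ξ+α₁} M_{α₂+ξ'}`. -/
noncomputable def Lpoly (K : Type) [Field K] (r : ℕ → ℕ) (s n : ℕ)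
    (S : Finset (Fin n × Fin n)) (ξ ξ' : Fin n × Fin n) : Rpoly K r s n :=
  ∑ m ∈ Finset.univ.filter (fun m : Fin n =>
      (m = ξ.2 ∨ inDr r s (ξ.2, m)) ∧ (m = ξ'.1 ∨ inDr r s (m, ξ'.1))),
    Mminor K r s n S (ξ.1, m) * Mminor K r s n S (m, ξ'.2)

/-- The set `Φ` of roots `φ_q = α_q + ξ'` attached to admissible pairs `q = (ξ, ξ')`. -/
noncomputable def PhiSet (r : ℕ → ℕ) (s n : ℕ) (S : Finset (Fin n × Fin n)) :
    Finset (Fin n × Fin n) :=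
  ((S ×ˢ S).filter fun q => inDr r s (q.1.2, q.2.1)).image fun q => (q.1.2, q.2.2)

/-- The adjoint action of `g` on `K[m]`: the substitution `x_ξ ↦ (g⁻¹ 𝕏 g)_ξ`,
so that `(g·f)(x) = f(g⁻¹ x g)`. -/
noncomputable def adjAct (K : Type) [Field K] (r : ℕ → ℕ) (s n : ℕ)
    (g : Matrix (Fin n) (Fin n) K) : Rpoly K r s n →ₐ[K] Rpoly K r s n :=
  MvPolynomial.aeval fun ξ : {p : Fin n × Fin n // p ∈ Mset r s n} =>
    ((g⁻¹).map (fun a => (MvPolynomial.C a : Rpoly K r s n)) * Xmat K r s n *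
      g.map (fun a => (MvPolynomial.C a : Rpoly K r s n))) ξ.1.1 ξ.1.2

/-- Upper unitriangular matrices: the group `N`. -/
def IsUnitriangular {K : Type} [Field K] {n : ℕ} (g : Matrix (Fin n) (Fin n) K) : Prop :=
  (∀ i, g i i = 1) ∧ ∀ i j : Fin n, j < i → g i j = 0

/-- Membership in the unipotent radical `U` of `P`: `g = I + u` with `u ∈ m`. -/
def InU {K : Type} [Field K] (r : ℕ → ℕ) (s n : ℕ) (g : Matrix (Fin n) (Fin n) K) : Prop :=
  (∀ i, g i i = 1) ∧ ∀ i j : Fin n, i ≠ j → (i, j) ∉ Mset r s n → g i j = 0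

/-- The subalgebra of `K[m]` of polynomials invariant under the adjoint action of
all elements of a set `G` of matrices. -/
noncomputable def invariantAlg (K : Type) [Field K] (r : ℕ → ℕ) (s n : ℕ)
    (G : Set (Matrix (Fin n) (Fin n) K)) : Subalgebra K (Rpoly K r s n) where
  carrier := {f | ∀ g ∈ G, adjAct K r s n g f = f}
  mul_mem' := fun ha hb g hg => by rw [map_mul, ha g hg, hb g hg]
  add_mem' := fun ha hb g hg => by rw [map_add, ha g hg, hb g hg]
  algebraMap_mem' := fun c g hg => (adjAct K r s n g).commutes c

/-- `M'`: the roots of `M` with `E_ξ ∈ m²`, i.e. not lying in a superdiagonal block. -/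
def Mprime (r : ℕ → ℕ) (s n : ℕ) : Finset (Fin n × Fin n) :=
  (Mset r s n).filter fun p => blockOf r s (p.1 : ℕ) + 1 < blockOf r s (p.2 : ℕ)

/-- The broad base `T`: roots `ξ ∈ S`, together with roots `ξ ∈ M` such that
`ξ > γ` for some `γ ∈ S` with `x_ξ`, `x_γ` in the same block `X_{i,j}`. -/
noncomputable def Tset (r : ℕ → ℕ) (s n : ℕ) (S : Finset (Fin n × Fin n)) :
    Finset (Fin n × Fin n) :=
  S ∪ (Mset r s n).filter fun ξ => ∃ γ ∈ S, rootGt ξ γ ∧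
    blockOf r s (ξ.1 : ℕ) = blockOf r s (γ.1 : ℕ) ∧
    blockOf r s (ξ.2 : ℕ) = blockOf r s (γ.2 : ℕ)

/-- The invariant `N_ξ`: the variable `x_ξ` for `ξ ∈ M ∖ M'`, the minor `M_ξ` for `ξ ∈ M'`. -/
noncomputable def Npoly (K : Type) [Field K] (r : ℕ → ℕ) (s n : ℕ)
    (S : Finset (Fin n × Fin n)) (ξ : Fin n × Fin n) : Rpoly K r s n :=
  if ξ ∈ Mprime r s n then Mminor K r s n S ξ
  else if h : ξ ∈ Mset r s n then MvPolynomial.X ⟨ξ, h⟩ else 0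

/-- A matrix lies in the nilradical `m`. -/
def memNilrad {K : Type} [Field K] (r : ℕ → ℕ) (s n : ℕ)
    (x : Matrix (Fin n) (Fin n) K) : Prop :=
  ∀ p : Fin n × Fin n, p ∉ Mset r s n → x p.1 p.2 = 0

/-- `W` is a Zariski-open subset of the affine space `m`. -/
def IsZariskiOpenIn (K : Type) [Field K] (r : ℕ → ℕ) (s n : ℕ)
    (W : Set (Matrix (Fin n) (Fin n) K)) : Prop :=
  ∃ I : Set (Rpoly K r s n),
    W = {x | memNilrad r s n x ∧ ∃ f ∈ I,
      MvPolynomial.eval (fun ξ : {p : Fin n × Fin n // p ∈ Mset r s n} => x ξ.1.1 ξ.1.2) f ≠ 0}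

lemma Rsum_mono (r : ℕ → ℕ) : Monotone (Rsum r) := fun _ _ h =>
  Finset.sum_le_sum_of_subset (Finset.range_subset_range.mpr h)

lemma blockOf_eq_of (r : ℕ → ℕ) (s k a : ℕ) (hk : k < s)
    (h1 : Rsum r k ≤ a) (h2 : a < Rsum r (k + 1)) : blockOf r s a = k := by
  unfold blockOf
  have hfe : (Finset.range s).filter (fun k' => Rsum r (k' + 1) ≤ a) = Finset.range k := by
    ext k'
    simp only [Finset.mem_filter, Finset.mem_range]
    constructor
    · rintro ⟨_, h⟩
      by_contra hc
      exact absurd (le_trans (Rsum_mono r (by omega : k + 1 ≤ k' + 1)) h) (by omega)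
    · intro h
      exact ⟨by omega, le_trans (Rsum_mono r (by omega : k' + 1 ≤ k)) h1⟩
  rw [hfe, Finset.card_range]

lemma blockOf_le_of (r : ℕ → ℕ) (s k c : ℕ) (h : c < Rsum r (k + 1)) :
    blockOf r s c ≤ k := by
  unfold blockOf
  calc ((Finset.range s).filter fun k' => Rsum r (k' + 1) ≤ c).card
      ≤ (Finset.range k).card := by
        apply Finset.card_le_card
        intro k' hk'
        simp only [Finset.mem_filter, Finset.mem_range] at hk' ⊢
        by_contra hc
        exact absurd (le_trans (Rsum_mono r (by omega : k + 1 ≤ k' + 1)) hk'.2) (by omega)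
    _ = k := Finset.card_range k

lemma le_blockOf_of (r : ℕ → ℕ) (s k c : ℕ) (hk : k + 1 ≤ s)
    (h : Rsum r (k + 1) ≤ c) : k + 1 ≤ blockOf r s c := by
  unfold blockOf
  calc k + 1 = (Finset.range (k + 1)).card := (Finset.card_range _).symm
    _ ≤ _ := by
        apply Finset.card_le_card
        intro k' hk'
        simp only [Finset.mem_range] at hk'
        simp only [Finset.mem_filter, Finset.mem_range]
        exact ⟨by omega, le_trans (Rsum_mono r (by omega : k' + 1 ≤ k + 1)) h⟩

lemma statement2_key (n s : ℕ) (r : ℕ → ℕ) (hpos : ∀ k < s, 0 < r k)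
    (hsum : Rsum r s = n) (S : Finset (Fin n × Fin n)) (hS : IsBase (Mset r s n) S)
    (k : ℕ) (hk : k + 1 < s) :
    ∀ t, t < min (r k) (r (k + 1)) → ∀ a b : Fin n,
      (a : ℕ) = Rsum r (k + 1) - 1 - t → (b : ℕ) = Rsum r (k + 1) + t → (a, b) ∈ S := by
  intro t
  induction t using Nat.strong_induction_on with
  | _ t IH =>
  intro ht a b ha hb
  have hrk : 0 < r k := hpos k (by omega)
  have hrk1 : 0 < r (k + 1) := hpos (k + 1) hk
  have hRk : Rsum r (k + 1) = Rsum r k + r k := Finset.sum_range_succ r k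
  have hRk2 : Rsum r (k + 1 + 1) = Rsum r (k + 1) + r (k + 1) := Finset.sum_range_succ r (k + 1)
  have hn : Rsum r (k + 1 + 1) ≤ n := hsum ▸ Rsum_mono r (by omega)
  have htk : t < r k := by omega
  have htk1 : t < r (k + 1) := by omega
  have hba : blockOf r s (a : ℕ) = k := blockOf_eq_of r s k a (by omega) (by omega) (by omega)
  have hbb : blockOf r s (b : ℕ) = k + 1 :=
    blockOf_eq_of r s (k + 1) b hk (by omega) (by omega)
  have hmem : (a, b) ∈ Mset r s n := by
    unfold Mset
    simp only [Finset.mem_filter, Finset.mem_univ, true_and]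
    rw [hba, hbb]; omega
  by_contra hnotS
  obtain ⟨ξ, hξS, hgt⟩ := hS.2.2 (a, b) hmem hnotS
  have hξM := hS.1 hξS
  have hξblk : blockOf r s (ξ.1 : ℕ) < blockOf r s (ξ.2 : ℕ) := by
    unfold Mset at hξM
    simpa using hξM
  rcases hgt with ⟨h1, h2⟩ | ⟨h1, h2⟩
  · -- same row: ξ = (a, ξ.2) with ξ.2 < b
    have hξ1 : (ξ.1 : ℕ) = (a : ℕ) := by rw [← h1]
    have hξ1blk : blockOf r s (ξ.1 : ℕ) = k := by rw [hξ1]; exact hba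
    have hR2 : Rsum r (k + 1) ≤ (ξ.2 : ℕ) := by
      by_contra hc
      have := blockOf_le_of r s k (ξ.2 : ℕ) (by omega)
      omega
    have hlt : (ξ.2 : ℕ) < (b : ℕ) := h2
    set t'' := (ξ.2 : ℕ) - Rsum r (k + 1) with ht''
    have ht''t : t'' < t := by omega
    have a' : Fin n := ⟨Rsum r (k + 1) - 1 - t'', by omega⟩
    have hδ : ((⟨Rsum r (k + 1) - 1 - t'', by omega⟩ : Fin n), ξ.2) ∈ S :=
      IH t'' ht''t (by omega) _ ξ.2 rfl (by omega)
    have hne : ξ ≠ ((⟨Rsum r (k + 1) - 1 - t'', by omega⟩ : Fin n), ξ.2) := by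
      intro h
      have := congrArg (fun p => ((p.1 : Fin n) : ℕ)) h
      simp only at this
      omega
    have hnot := (hS.2.1 ξ hξS _ hδ hne).1
    apply hnot
    right
    refine ⟨rfl, ?_⟩
    rw [Fin.lt_def]
    simp only
    omega
  · -- same column: ξ = (ξ.1, b) with a < ξ.1
    have hξ2 : (ξ.2 : ℕ) = (b : ℕ) := by rw [← h1]
    have hξ2blk : blockOf r s (ξ.2 : ℕ) = k + 1 := by rw [hξ2]; exact hbb
    have hξ1lt : (ξ.1 : ℕ) < Rsum r (k + 1) := by
      by_contra hc
      have := le_blockOf_of r s k (ξ.1 : ℕ) (by omega) (by omega)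
      omega
    have hgt1 : (a : ℕ) < (ξ.1 : ℕ) := h2
    set t'' := Rsum r (k + 1) - 1 - (ξ.1 : ℕ) with ht''
    have ht''t : t'' < t := by omega
    have hδ : (ξ.1, (⟨Rsum r (k + 1) + t'', by omega⟩ : Fin n)) ∈ S :=
      IH t'' ht''t (by omega) ξ.1 _ (by omega) rfl
    have hne : ξ ≠ (ξ.1, (⟨Rsum r (k + 1) + t'', by omega⟩ : Fin n)) := by
      intro h
      have := congrArg (fun p => ((p.2 : Fin n) : ℕ)) h
      simp only at this
      omega
    have hnot := (hS.2.1 ξ hξS _ hδ hne).1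
    apply hnot
    left
    refine ⟨rfl, ?_⟩
    rw [Fin.lt_def]
    simp only
    omega

/-- the antidiagonal of each superdiagonal block `X_{k,k+1}` lies in the
base `S`: (in 1-indexed terms) the roots `(R_{k+1} − t, R_{k+1} + 1 + t)` for
`0 ≤ t < min(r_{k+1}-block size, next block size)` all lie in `S`. -/
theorem statement2 (K : Type) [Field K] [IsAlgClosed K] [CharZero K]
    (n s : ℕ) (r : ℕ → ℕ) (hpos : ∀ k < s, 0 < r k) (hsum : Rsum r s = n)
    (S : Finset (Fin n × Fin n)) (hS : IsBase (Mset r s n) S)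
    (k t : ℕ) (hk : k + 1 < s) (ht : t < min (r k) (r (k + 1)))
    (a b : Fin n) (ha : (a : ℕ) = Rsum r (k + 1) - 1 - t)
    (hb : (b : ℕ) = Rsum r (k + 1) + t) :
    (a, b) ∈ S := by
  exact statement2_key n s r hpos hsum S hS k hk t ht a b ha hb
end

section
/- For every root ξ in the base S, the minor M_ξ is invariant under the adjoint action of the upper unitriangular group N on K[m]. -/
open scoped Matrix Classical
open MvPolynomial

/-!
Both `g⁻¹` and `g` are upper unitriangular. Expanding the minor of `g⁻¹ 𝕏 g` on rows `I` and
columns `J` multilinearly, first in the rows and then in the columns, a term survives only if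
its row tuple lies entrywise weakly below the sorted rows of `I` (resp. its column tuple weakly
left of the sorted columns of `J`), and it is a minor of a matrix (`𝕏 g`, resp. `𝕏`) that still
vanishes outside `M`. The base property of `S` kills every such minor except the one on `I × J`:
a row `x ∉ I` below the `t`-th row of `I` meeting the `t`-th column of `J` inside `M` would, by
the covering property, put cells of `S` in all columns of `J` from the `t`-th on, in rows of `I`
after the `t`-th; that is one row too few, as distinct cells of `S` lie in distinct rows. The
surviving term carries diagonal entries of `g⁻¹` and `g`, which are `1`.
-/

namespace Matrix

variable {ι κ R : Type*} [Fintype κ] [DecidableEq κ] [CommRing R]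

theorem det_mul_eq_sum_prod_mul_det_submatrix [Fintype ι] (P : Matrix κ ι R)
    (N : Matrix ι κ R) :
    (P * N).det = ∑ f : κ → ι, (∏ t, P t (f t)) * (N.submatrix f id).det := by
  have hrows : P * N = Matrix.of fun t => ∑ j, P t j • N j := by
    ext t k
    simp [Matrix.mul_apply]
  rw [hrows]
  change detRowAlternating (fun t => ∑ j, P t j • N j) = _
  rw [← AlternatingMap.coe_multilinearMap, MultilinearMap.map_sum]
  refine Finset.sum_congr rfl fun f _ => ?_
  exact (detRowAlternating : (κ → R) [⋀^κ]→ₗ[R] R).toMultilinearMap.map_smul_univ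
    (fun t => P t (f t)) (fun t => N (f t))

theorem exists_perm_forall_ne_zero_of_det_ne_zero {M : Matrix κ κ R} (h : M.det ≠ 0) :
    ∃ σ : Equiv.Perm κ, ∀ i, M (σ i) i ≠ 0 := by
  rw [det_apply] at h
  obtain ⟨σ, -, hσ⟩ := Finset.exists_ne_zero_of_sum_ne_zero h
  exact ⟨σ, fun i hi =>
    hσ (smul_eq_zero_of_right _ (Finset.prod_eq_zero (Finset.mem_univ i) hi))⟩

theorem injective_of_det_submatrix_ne_zero {M : Matrix ι ι R} {f c : κ → ι}
    (h : (M.submatrix f c).det ≠ 0) : Function.Injective f := by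
  intro a b hab
  by_contra hne
  exact h (det_zero_of_row_eq hne (by ext; simp [hab]))

variable [Fintype ι] {β : Type*} [LinearOrder β] {b : ι → β}

theorem det_submatrix_mul_eq_of_blockTriangular_left {A : Matrix ι ι R}
    (hA : A.BlockTriangular b) (hA₁ : ∀ i, A i i = 1) {Y : Matrix ι ι R} {rr cc : κ → ι}
    (hY : ∀ f : κ → ι, (∀ t, b (rr t) ≤ b (f t)) →
      (Y.submatrix f cc).det ≠ 0 → f = rr) :
    ((A * Y).submatrix rr cc).det = (Y.submatrix rr cc).det := by
  rw [submatrix_mul _ _ _ id _ Function.bijective_id, det_mul_eq_sum_prod_mul_det_submatrix,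
    Finset.sum_eq_single_of_mem rr (Finset.mem_univ _)]
  · simp [hA₁]
  · intro f _ hf
    simp only [submatrix_submatrix, Function.id_comp, Function.comp_id, submatrix_apply, id]
    by_cases hle : ∀ t, b (rr t) ≤ b (f t)
    · rw [not_imp_comm.mp (hY f hle) hf, mul_zero]
    · push Not at hle
      obtain ⟨t, ht⟩ := hle
      rw [Finset.prod_eq_zero (Finset.mem_univ t) (hA ht), zero_mul]

theorem det_submatrix_mul_eq_of_blockTriangular_right [DecidableEq ι] {B : Matrix ι ι R}
    (hB : B.BlockTriangular b) (hB₁ : ∀ i, B i i = 1) {Y : Matrix ι ι R} {rr cc : κ → ι}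
    (hY : ∀ h : κ → ι, (∀ t, b (h t) ≤ b (cc t)) →
      (Y.submatrix rr h).det ≠ 0 → h = cc) :
    ((Y * B).submatrix rr cc).det = (Y.submatrix rr cc).det := by
  rw [← det_transpose, transpose_submatrix, transpose_mul,
    det_submatrix_mul_eq_of_blockTriangular_left hB.transpose hB₁, ← transpose_submatrix,
    det_transpose]
  intro h hh hdet
  rw [← transpose_submatrix, det_transpose] at hdet
  exact hY h hh hdet

end Matrix

namespace Fin

variable {m : ℕ}

theorem exists_le_forall_lt_not_rel (t : Fin m) {R : Fin m → Fin m → Prop}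
    (hR : ∀ u₁ u₂ w, R u₁ w → R u₂ w → u₁ = u₂) :
    ∃ u ≤ t, ∀ w < t, ¬R u w := by
  by_contra! h
  have := Finset.card_le_card_of_forall_subsingleton R
    (s := Finset.Iic t) (t := Finset.Iio t)
    (fun u hu => by simpa using h u (Finset.mem_Iic.mp hu))
    (fun w _ u₁ hu₁ u₂ hu₂ => hR u₁ u₂ w hu₁.2 hu₂.2)
  simp at this

theorem exists_ge_forall_gt_not_rel (t : Fin m) {R : Fin m → Fin m → Prop}
    (hR : ∀ u₁ u₂ w, R u₁ w → R u₂ w → u₁ = u₂) :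
    ∃ u ≥ t, ∀ w > t, ¬R u w := by
  by_contra! h
  have := Finset.card_le_card_of_forall_subsingleton R
    (s := Finset.Ici t) (t := Finset.Ioi t)
    (fun u hu => by simpa using h u (Finset.mem_Ici.mp hu))
    (fun w _ u₁ hu₁ u₂ hu₂ => hR u₁ u₂ w hu₁.2 hu₂.2)
  simp at this
  omega

theorem exists_le_le_perm_apply (π : Equiv.Perm (Fin m)) (t : Fin m) :
    ∃ u ≤ t, t ≤ π u := by
  obtain ⟨u, hut, hu⟩ := exists_le_forall_lt_not_rel t (R := fun u w => π u = w)
    (fun u₁ u₂ w h₁ h₂ => π.injective (h₁.trans h₂.symm))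
  exact ⟨u, hut, not_lt.mp fun h => hu _ h rfl⟩

theorem exists_ge_perm_apply_le (π : Equiv.Perm (Fin m)) (t : Fin m) :
    ∃ u ≥ t, π u ≤ t := by
  obtain ⟨v, hvt, hv⟩ := exists_le_le_perm_apply π⁻¹ t
  exact ⟨π⁻¹ v, hv, by simpa using hvt⟩

theorem perm_apply_eq_of_forall_le {π : Equiv.Perm (Fin m)} (hπ : ∀ t, t ≤ π t) (t : Fin m) :
    π t = t := by
  obtain ⟨u, hut, hu⟩ := exists_le_le_perm_apply π⁻¹ t
  have hu' : π⁻¹ u ≤ u := by simpa using hπ (π⁻¹ u)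
  obtain rfl : u = t := le_antisymm hut (hu.trans hu')
  exact π.eq_symm_apply.mp (le_antisymm hu' hu).symm

theorem perm_apply_eq_of_forall_apply_le {π : Equiv.Perm (Fin m)} (hπ : ∀ t, π t ≤ t)
    (t : Fin m) : π t = t := by
  have h := perm_apply_eq_of_forall_le (π := π⁻¹) (fun t => by simpa using hπ (π⁻¹ t)) (π t)
  simpa using h.symm

variable {α : Type*} [LinearOrder α]

theorem le_comp_sort {l f : Fin m → α} (hl : Monotone l) (h : ∀ t, l t ≤ f t) (t : Fin m) :
    l t ≤ f (Tuple.sort f t) := by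
  obtain ⟨u, hut, hu⟩ := exists_le_le_perm_apply (Tuple.sort f) t
  calc l t ≤ l (Tuple.sort f u) := hl hu
    _ ≤ f (Tuple.sort f u) := h _
    _ ≤ f (Tuple.sort f t) := Tuple.monotone_sort f hut

theorem comp_sort_le {f g : Fin m → α} (hg : Monotone g) (h : ∀ t, f t ≤ g t) (t : Fin m) :
    f (Tuple.sort f t) ≤ g t := by
  obtain ⟨u, htu, hu⟩ := exists_ge_perm_apply_le (Tuple.sort f) t
  calc f (Tuple.sort f t) ≤ f (Tuple.sort f u) := Tuple.monotone_sort f htu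
    _ ≤ g (Tuple.sort f u) := h _
    _ ≤ g t := hg hu

end Fin

section

variable {n s : ℕ} {r : ℕ → ℕ}

theorem blockOf_mono : Monotone (blockOf r s) := fun _ _ h =>
  Finset.card_le_card fun _ hk => by
    rw [Finset.mem_filter] at hk ⊢
    exact ⟨hk.1, hk.2.trans h⟩

theorem mem_Mset_of_le {x x' y y' : Fin n} (h : (x, y) ∈ Mset r s n) (hx : x' ≤ x)
    (hy : y ≤ y') : (x', y') ∈ Mset r s n := by
  simp only [Mset, Finset.mem_filter, Finset.mem_univ, true_and] at h ⊢
  exact (blockOf_mono (Fin.val_le_of_le hx)).trans_lt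
    (h.trans_le (blockOf_mono (Fin.val_le_of_le hy)))

def SupportedOnMset {R : Type*} [Zero R] (r : ℕ → ℕ) (s : ℕ)
    (Y : Matrix (Fin n) (Fin n) R) : Prop :=
  ∀ i j, Y i j ≠ 0 → (i, j) ∈ Mset r s n

namespace SupportedOnMset

variable {R : Type*} [CommRing R] {Y : Matrix (Fin n) (Fin n) R}

theorem mul_of_isUpperTriangular (hY : SupportedOnMset r s Y) {B : Matrix (Fin n) (Fin n) R}
    (hB : B.IsUpperTriangular) : SupportedOnMset r s (Y * B) := by
  intro i j h
  rw [Matrix.mul_apply] at h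
  obtain ⟨q, -, hq⟩ := Finset.exists_ne_zero_of_sum_ne_zero h
  exact mem_Mset_of_le (hY i q (left_ne_zero_of_mul hq)) le_rfl
    (not_lt.mp fun hjq => right_ne_zero_of_mul hq (hB hjq))

theorem isUpperTriangular_mul (hY : SupportedOnMset r s Y) {A : Matrix (Fin n) (Fin n) R}
    (hA : A.IsUpperTriangular) : SupportedOnMset r s (A * Y) := by
  intro i j h
  rw [Matrix.mul_apply] at h
  obtain ⟨p, -, hp⟩ := Finset.exists_ne_zero_of_sum_ne_zero h
  exact mem_Mset_of_le (hY p j (right_ne_zero_of_mul hp))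
    (not_lt.mp fun hpi => left_ne_zero_of_mul hp (hA hpi)) le_rfl

end SupportedOnMset

theorem supportedOnMset_Xmat (K : Type) [Field K] : SupportedOnMset r s (Xmat K r s n) := by
  intro i j h
  by_contra hij
  exact h (dif_neg hij)

namespace IsBase

variable {M S : Finset (Fin n × Fin n)}

theorem injOn_fst (hS : IsBase M S) : Set.InjOn Prod.fst (S : Set (Fin n × Fin n)) := by
  intro p hp q hq h
  by_contra hne
  obtain ⟨hpq, hqp⟩ := hS.2.1 p hp q hq hne
  rcases lt_trichotomy p.2 q.2 with hlt | heq | hgt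
  · exact hqp (Or.inl ⟨h.symm, hlt⟩)
  · exact hne (Prod.ext h heq)
  · exact hpq (Or.inl ⟨h, hgt⟩)

theorem injOn_snd (hS : IsBase M S) : Set.InjOn Prod.snd (S : Set (Fin n × Fin n)) := by
  intro p hp q hq h
  by_contra hne
  obtain ⟨hpq, hqp⟩ := hS.2.1 p hp q hq hne
  rcases lt_trichotomy p.1 q.1 with hlt | heq | hgt
  · exact hpq (Or.inr ⟨h, hlt⟩)
  · exact hne (Prod.ext heq h)
  · exact hqp (Or.inr ⟨h.symm, hgt⟩)

theorem exists_of_mem (hS : IsBase M S) {x y : Fin n} (h : (x, y) ∈ M) :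
    (∃ y' ≤ y, (x, y') ∈ S) ∨ ∃ x' ≥ x, (x', y) ∈ S := by
  by_cases hxy : (x, y) ∈ S
  · exact Or.inl ⟨y, le_rfl, hxy⟩
  obtain ⟨η, hη, hgt | hgt⟩ := hS.2.2 _ h hxy
  · exact Or.inl ⟨η.2, hgt.2.le, by simpa [show x = η.1 from hgt.1] using hη⟩
  · exact Or.inr ⟨η.1, hgt.2.le, by simpa [show y = η.2 from hgt.1] using hη⟩

end IsBase

theorem minorDet_eq_det_submatrix {A : Type} [CommRing A] (X : Matrix (Fin n) (Fin n) A)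
    {I J : Finset (Fin n)} (h : J.card = I.card) :
    minorDet X I J = (X.submatrix (I.orderEmbOfFin rfl) (J.orderEmbOfFin h)).det := by
  rw [minorDet, dif_pos h]
  rfl

/-- For `ξ ∈ S` this is `S_ξ ∪ {ξ}` (`baseBox_eq_insert`), whose rows and columns are the
rows and columns of `M_ξ`. -/
def baseBox (S : Finset (Fin n × Fin n)) (ξ : Fin n × Fin n) : Finset (Fin n × Fin n) :=
  S.filter fun p => ξ.1 ≤ p.1 ∧ p.2 ≤ ξ.2

def baseRows (S : Finset (Fin n × Fin n)) (ξ : Fin n × Fin n) : Finset (Fin n) :=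
  (baseBox S ξ).image Prod.fst

def baseCols (S : Finset (Fin n × Fin n)) (ξ : Fin n × Fin n) : Finset (Fin n) :=
  (baseBox S ξ).image Prod.snd

section baseBox

variable {S : Finset (Fin n × Fin n)} {ξ : Fin n × Fin n}

theorem mem_baseRows_iff {x : Fin n} :
    x ∈ baseRows S ξ ↔ ∃ y, (x, y) ∈ S ∧ ξ.1 ≤ x ∧ y ≤ ξ.2 := by
  simp [baseRows, baseBox]

theorem mem_baseCols_iff {y : Fin n} :
    y ∈ baseCols S ξ ↔ ∃ x, (x, y) ∈ S ∧ ξ.1 ≤ x ∧ y ≤ ξ.2 := by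
  simp [baseCols, baseBox]

theorem baseBox_eq_insert {M : Finset (Fin n × Fin n)} (hS : IsBase M S) (hξ : ξ ∈ S) :
    baseBox S ξ = insert ξ (S.filter fun p => ξ.1 < p.1 ∧ p.2 < ξ.2) := by
  ext p
  simp only [baseBox, Finset.mem_insert, Finset.mem_filter]
  constructor
  · rintro ⟨hp, h₁, h₂⟩
    rcases h₁.eq_or_lt with h₁ | h₁
    · exact Or.inl (hS.injOn_fst hp hξ h₁.symm)
    rcases h₂.eq_or_lt with h₂ | h₂
    · exact Or.inl (hS.injOn_snd hp hξ h₂)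
    · exact Or.inr ⟨hp, h₁, h₂⟩
  · rintro (rfl | ⟨hp, h₁, h₂⟩)
    · exact ⟨hξ, le_rfl, le_rfl⟩
    · exact ⟨hp, h₁.le, h₂.le⟩

theorem Mminor_eq_minorDet (K : Type) [Field K] {M : Finset (Fin n × Fin n)} (hS : IsBase M S)
    (hξ : ξ ∈ S) :
    Mminor K r s n S ξ = minorDet (Xmat K r s n) (baseRows S ξ) (baseCols S ξ) := by
  rw [baseRows, baseCols, baseBox_eq_insert hS hξ, Finset.image_insert, Finset.image_insert]
  rfl

theorem card_baseCols {M : Finset (Fin n × Fin n)} (hS : IsBase M S) :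
    (baseCols S ξ).card = (baseRows S ξ).card := by
  have hsub : (baseBox S ξ : Set (Fin n × Fin n)) ⊆ S := Finset.filter_subset _ _
  rw [baseCols, baseRows, Finset.card_image_of_injOn (hS.injOn_snd.mono hsub),
    Finset.card_image_of_injOn (hS.injOn_fst.mono hsub)]

variable {m : ℕ} (hI : (baseRows S ξ).card = m) (hJ : (baseCols S ξ).card = m)

theorem mem_baseRows_of_mem_Mset (hS : IsBase (Mset r s n) S) {t : Fin m} {x : Fin n}
    (hx : (baseRows S ξ).orderEmbOfFin hI t ≤ x)
    (hM : (x, (baseCols S ξ).orderEmbOfFin hJ t) ∈ Mset r s n) : x ∈ baseRows S ξ := by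
  set rr := (baseRows S ξ).orderEmbOfFin hI
  set cc := (baseCols S ξ).orderEmbOfFin hJ
  have hξrr : ξ.1 ≤ rr t := by
    obtain ⟨_, _, h, _⟩ := mem_baseRows_iff.mp ((baseRows S ξ).orderEmbOfFin_mem hI t)
    exact h
  have hccξ : ∀ u, cc u ≤ ξ.2 := fun u => by
    obtain ⟨_, _, _, h⟩ := mem_baseCols_iff.mp ((baseCols S ξ).orderEmbOfFin_mem hJ u)
    exact h
  by_contra hxI
  have hlt : rr t < x :=
    hx.lt_of_ne fun h => hxI (h ▸ (baseRows S ξ).orderEmbOfFin_mem hI t)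
  -- pigeonhole: each column `cc u`, `u ≥ t`, needs a cell of `S` in its own row `rr w`, `w > t`
  obtain ⟨u, htu, hu⟩ := Fin.exists_ge_forall_gt_not_rel t (R := fun u w => (rr w, cc u) ∈ S)
    fun u₁ u₂ w h₁ h₂ => cc.injective (congrArg Prod.snd (hS.injOn_fst h₁ h₂ rfl))
  rcases hS.exists_of_mem (mem_Mset_of_le hM le_rfl (cc.monotone htu)) with
    ⟨y, hy, hxy⟩ | ⟨x', hxx', hx'y⟩
  · exact hxI (mem_baseRows_iff.mpr ⟨y, hxy, hξrr.trans hlt.le, hy.trans (hccξ u)⟩)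
  · have hx' : x' ∈ Set.range rr := by
      rw [Finset.range_orderEmbOfFin]
      exact mem_baseRows_iff.mpr ⟨_, hx'y, hξrr.trans (hlt.le.trans hxx'), hccξ u⟩
    obtain ⟨w, rfl⟩ := hx'
    exact hu w (rr.lt_iff_lt.mp (hlt.trans_le hxx')) hx'y

theorem mem_baseCols_of_mem_Mset (hS : IsBase (Mset r s n) S) {t : Fin m} {y : Fin n}
    (hy : y ≤ (baseCols S ξ).orderEmbOfFin hJ t)
    (hM : ((baseRows S ξ).orderEmbOfFin hI t, y) ∈ Mset r s n) : y ∈ baseCols S ξ := by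
  set rr := (baseRows S ξ).orderEmbOfFin hI
  set cc := (baseCols S ξ).orderEmbOfFin hJ
  have hξrr : ∀ v, ξ.1 ≤ rr v := fun v => by
    obtain ⟨_, _, h, _⟩ := mem_baseRows_iff.mp ((baseRows S ξ).orderEmbOfFin_mem hI v)
    exact h
  have hccξ : cc t ≤ ξ.2 := by
    obtain ⟨_, _, _, h⟩ := mem_baseCols_iff.mp ((baseCols S ξ).orderEmbOfFin_mem hJ t)
    exact h
  by_contra hyJ
  have hlt : y < cc t :=
    hy.lt_of_ne fun h => hyJ (h ▸ (baseCols S ξ).orderEmbOfFin_mem hJ t)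
  -- pigeonhole: each row `rr v`, `v ≤ t`, needs a cell of `S` in its own column `cc w`, `w < t`
  obtain ⟨v, hvt, hv⟩ := Fin.exists_le_forall_lt_not_rel t (R := fun v w => (rr v, cc w) ∈ S)
    fun v₁ v₂ w h₁ h₂ => rr.injective (congrArg Prod.fst (hS.injOn_snd h₁ h₂ rfl))
  rcases hS.exists_of_mem (mem_Mset_of_le hM (rr.monotone hvt) le_rfl) with
    ⟨y', hy'y, hvy'⟩ | ⟨x, hvx, hxy⟩
  · have hy' : y' ∈ Set.range cc := by
      rw [Finset.range_orderEmbOfFin]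
      exact mem_baseCols_iff.mpr ⟨_, hvy', hξrr v, hy'y.trans (hlt.le.trans hccξ)⟩
    obtain ⟨w, rfl⟩ := hy'
    exact hv w (cc.lt_iff_lt.mp (hy'y.trans_lt hlt)) hvy'
  · exact hyJ (mem_baseCols_iff.mpr ⟨x, hxy, (hξrr v).trans hvx, hlt.le.trans hccξ⟩)

variable {R : Type*} [CommRing R] {Y : Matrix (Fin n) (Fin n) R}

theorem SupportedOnMset.eq_rows_of_det_submatrix_ne_zero (hY : SupportedOnMset r s Y)
    (hS : IsBase (Mset r s n) S) {f : Fin m → Fin n}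
    (hf : ∀ t, (baseRows S ξ).orderEmbOfFin hI t ≤ f t)
    (hdet : (Y.submatrix f ((baseCols S ξ).orderEmbOfFin hJ)).det ≠ 0) :
    f = (baseRows S ξ).orderEmbOfFin hI := by
  set rr := (baseRows S ξ).orderEmbOfFin hI
  set cc := (baseCols S ξ).orderEmbOfFin hJ
  set τ := Tuple.sort f
  obtain ⟨σ, hσ⟩ := Matrix.exists_perm_forall_ne_zero_of_det_ne_zero hdet
  have hmono : StrictMono (f ∘ τ) := (Tuple.monotone_sort f).strictMono_of_injective
    ((Matrix.injective_of_det_submatrix_ne_zero hdet).comp τ.injective)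
  have hmem : ∀ t, f (τ t) ∈ baseRows S ξ := by
    intro t
    obtain ⟨u, hut, hu⟩ := Fin.exists_le_le_perm_apply (τ⁻¹ * σ) t
    refine mem_baseRows_of_mem_Mset hI hJ hS (Fin.le_comp_sort rr.monotone hf t)
      (mem_Mset_of_le (hY _ _ (hσ u)) ?_ (cc.monotone hut))
    simpa using hmono.monotone hu
  have hsorted : f ∘ τ = rr := Finset.orderEmbOfFin_unique hI hmem hmono
  have hf' : ∀ t, f t = rr (τ⁻¹ t) := fun t => by
    simp [← hsorted]
  have hτ : ∀ t, τ⁻¹ t = t := Fin.perm_apply_eq_of_forall_le fun t =>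
    rr.le_iff_le.mp (hf' t ▸ hf t)
  funext t
  rw [hf', hτ]

theorem SupportedOnMset.eq_cols_of_det_submatrix_ne_zero (hY : SupportedOnMset r s Y)
    (hS : IsBase (Mset r s n) S) {h : Fin m → Fin n}
    (hh : ∀ t, h t ≤ (baseCols S ξ).orderEmbOfFin hJ t)
    (hdet : (Y.submatrix ((baseRows S ξ).orderEmbOfFin hI) h).det ≠ 0) :
    h = (baseCols S ξ).orderEmbOfFin hJ := by
  set rr := (baseRows S ξ).orderEmbOfFin hI
  set cc := (baseCols S ξ).orderEmbOfFin hJ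
  set τ := Tuple.sort h
  obtain ⟨σ, hσ⟩ := Matrix.exists_perm_forall_ne_zero_of_det_ne_zero hdet
  have hinj : Function.Injective h := Matrix.injective_of_det_submatrix_ne_zero (M := Yᵀ)
    (by rwa [← Matrix.transpose_submatrix, Matrix.det_transpose])
  have hmono : StrictMono (h ∘ τ) :=
    (Tuple.monotone_sort h).strictMono_of_injective (hinj.comp τ.injective)
  have hmem : ∀ t, h (τ t) ∈ baseCols S ξ := by
    intro t
    obtain ⟨v, hvt, hv⟩ := Fin.exists_le_le_perm_apply (σ * τ) t
    refine mem_baseCols_of_mem_Mset hI hJ hS (Fin.comp_sort_le cc.monotone hh t)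
      (mem_Mset_of_le (hY _ _ (hσ (τ v))) (rr.monotone hv) (hmono.monotone hvt))
  have hsorted : h ∘ τ = cc := Finset.orderEmbOfFin_unique hJ hmem hmono
  have hh' : ∀ t, h t = cc (τ⁻¹ t) := fun t => by simp [← hsorted]
  have hτ : ∀ t, τ⁻¹ t = t := Fin.perm_apply_eq_of_forall_apply_le fun t =>
    cc.le_iff_le.mp (hh' t ▸ hh t)
  funext t
  rw [hh', hτ]

end baseBox

namespace IsUnitriangular

variable {K : Type} [Field K] {g : Matrix (Fin n) (Fin n) K}

theorem isUpperTriangular (hg : IsUnitriangular g) : g.IsUpperTriangular :=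
  fun i j h => hg.2 i j h

theorem inv (hg : IsUnitriangular g) : IsUnitriangular g⁻¹ := by
  have hdet : IsUnit g.det := by
    simp [Matrix.det_of_isUpperTriangular hg.isUpperTriangular, hg.1]
  have : Invertible g := g.invertibleOfIsUnitDet hdet
  have hinv : g⁻¹.IsUpperTriangular :=
    Matrix.blockTriangular_inv_of_blockTriangular hg.isUpperTriangular
  refine ⟨fun i => ?_, fun i j h => hinv h⟩
  -- the diagonal of a product of upper triangular matrices is the product of the diagonals
  have hdiag := congrFun (congrFun (Matrix.nonsing_inv_mul g hdet) i) i
  rw [Matrix.mul_apply, Finset.sum_eq_single i, hg.1 i, mul_one] at hdiag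
  · simpa using hdiag
  · intro p _ hpi
    rcases hpi.lt_or_gt with hp | hp
    · rw [hinv hp, zero_mul]
    · rw [hg.2 p i hp, mul_zero]
  · simp

end IsUnitriangular

theorem Xmat_map_adjAct (K : Type) [Field K] {g : Matrix (Fin n) (Fin n) K}
    (hg : IsUnitriangular g) :
    (Xmat K r s n).map (adjAct K r s n g) =
      (g⁻¹).map (MvPolynomial.C : K →+* Rpoly K r s n) * Xmat K r s n *
        g.map (MvPolynomial.C : K →+* Rpoly K r s n) := by
  refine Matrix.ext fun i j => ?_
  rw [Matrix.map_apply]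
  by_cases hij : (i, j) ∈ Mset r s n
  · rw [show Xmat K r s n i j = MvPolynomial.X ⟨(i, j), hij⟩ from dif_pos hij, adjAct,
      MvPolynomial.aeval_X]
  · have hsupp := ((supportedOnMset_Xmat (r := r) (s := s) K).isUpperTriangular_mul
      (hg.inv.isUpperTriangular.map MvPolynomial.C)).mul_of_isUpperTriangular
      (hg.isUpperTriangular.map MvPolynomial.C)
    rw [show Xmat K r s n i j = 0 from dif_neg hij, map_zero]
    exact (not_imp_comm.mp (hsupp i j) hij).symm

end

theorem statement3_general (K : Type) [Field K]
    (n s : ℕ) (r : ℕ → ℕ)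
    (S : Finset (Fin n × Fin n)) (hS : IsBase (Mset r s n) S)
    (ξ : Fin n × Fin n) (hξ : ξ ∈ S)
    (g : Matrix (Fin n) (Fin n) K) (hg : IsUnitriangular g) :
    adjAct K r s n g (Mminor K r s n S ξ) = Mminor K r s n S ξ := by
  have hJ := card_baseCols (ξ := ξ) hS
  have hX : SupportedOnMset r s (Xmat K r s n) := supportedOnMset_Xmat K
  have hA := hg.inv.isUpperTriangular.map (MvPolynomial.C : K →+* Rpoly K r s n)
  have hB := hg.isUpperTriangular.map (MvPolynomial.C : K →+* Rpoly K r s n)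
  rw [Mminor_eq_minorDet K hS hξ, minorDet_eq_det_submatrix _ hJ, AlgHom.map_det,
    AlgHom.mapMatrix_apply, ← Matrix.submatrix_map, Xmat_map_adjAct K hg, Matrix.mul_assoc,
    Matrix.det_submatrix_mul_eq_of_blockTriangular_left hA (by simp [hg.inv.1])
      fun f hf hdet => (hX.mul_of_isUpperTriangular hB).eq_rows_of_det_submatrix_ne_zero
        rfl hJ hS hf hdet]
  exact Matrix.det_submatrix_mul_eq_of_blockTriangular_right hB (by simp [hg.1])
    fun h hh hdet => hX.eq_cols_of_det_submatrix_ne_zero rfl hJ hS hh hdet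

/-- for every `ξ` in the base `S`, the minor `M_ξ` is invariant under the
adjoint action of the upper unitriangular group `N` on `K[m]`. -/
theorem statement3 (K : Type) [Field K] [IsAlgClosed K] [CharZero K]
    (n s : ℕ) (r : ℕ → ℕ) (hpos : ∀ k < s, 0 < r k) (hsum : Rsum r s = n)
    (S : Finset (Fin n × Fin n)) (hS : IsBase (Mset r s n) S)
    (ξ : Fin n × Fin n) (hξ : ξ ∈ S)
    (g : Matrix (Fin n) (Fin n) K) (hg : IsUnitriangular g) :
    adjAct K r s n g (Mminor K r s n S ξ) = Mminor K r s n S ξ :=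
  statement3_general K n s r S hS ξ hξ g hg
end

section
/- The restrictions to Y of the invariants in the extended base are algebraically independent: the images {M_ξ|_Y : ξ ∈ S} ∪ {L_φ|_Y : φ ∈ Φ} under the restriction homomorphism K[m] → K[Y] form an algebraically independent system over K, where K[Y] is the polynomial algebra in the variables x_ξ, ξ ∈ S, and x_φ, φ ∈ Φ. -/
open scoped Matrix Classical
open MvPolynomial

/-- The restriction homomorphism `K[m] → K[Y]`, `K[Y]` being the polynomial algebra in
the variables `x_ξ`, `ξ ∈ S ∪ Φ`: it sends `x_γ` to `x_γ` for `γ ∈ S ∪ Φ` and to `0`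
otherwise. -/
noncomputable def restrictY (K : Type) [Field K] (r : ℕ → ℕ) (s n : ℕ)
    (S : Finset (Fin n × Fin n)) :
    Rpoly K r s n →ₐ[K] MvPolynomial {p : Fin n × Fin n // p ∈ S ∪ PhiSet r s n S} K :=
  MvPolynomial.aeval fun γ : {p : Fin n × Fin n // p ∈ Mset r s n} =>
    if h : γ.1 ∈ S ∪ PhiSet r s n S then MvPolynomial.X ⟨γ.1, h⟩ else 0

/-!
On `Y` every minor `M_γ` with `γ ∈ S ∪ Φ` is `±` the monomial `∏ x_τ` over `τ ∈ {γ} ∪ S_γ`: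
indexing both rows and columns of the minor by `{γ} ∪ S_γ` makes it upper triangular, because
on `Y` no variable sits to the right of an element of `S` in its row. For the same reason the
minors `M_γ` with `γ ∉ S ∪ Φ` vanish on `Y`, so `L_φ|_Y = M_ξ|_Y · M_φ|_Y`. Hence all restricted
invariants are nonzero multiples of monomials, and their exponent vectors are triangular:
`x_φ` occurs only in `L_φ`, while `x_ξ` (`ξ ∈ S`) occurs, apart from `M_ξ` and the `L`'s, only in
minors `M_ζ` of strictly wider roots `ζ`. Monomials whose exponent vectors are linearly independent
over `ℕ` are algebraically independent.
-/

theorem Matrix.BlockTriangular.det_of_injective {ι α R : Type*} [Fintype ι] [DecidableEq ι]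
    [LinearOrder α] [CommRing R] {A : Matrix ι ι R} {f : ι → α} (hA : A.BlockTriangular f)
    (hf : Function.Injective f) : A.det = ∏ i, A i i := by
  let : LinearOrder ι := LinearOrder.lift' f hf
  exact Matrix.det_of_isUpperTriangular hA

theorem Finsupp.linearCombination_nat_injective_of_triangular {σ τ : Type*} (t : σ → τ →₀ ℕ)
    (ι : σ → τ) (ρ : σ → ℕ) (hdiag : ∀ i, t i (ι i) ≠ 0)
    (htri : ∀ i j, j ≠ i → t j (ι i) ≠ 0 → ρ j < ρ i) :
    Function.Injective (Finsupp.linearCombination ℕ t) := by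
  classical
  intro d d' hdd
  ext i
  induction hρ : ρ i using Nat.strong_induction_on generalizing i with
  | _ k ih =>
    set A := insert i (d.support ∪ d'.support)
    have hcoord : ∀ e : σ →₀ ℕ, e.support ⊆ A →
        Finsupp.linearCombination ℕ t e (ι i) =
          e i * t i (ι i) + ∑ j ∈ A.erase i, e j * t j (ι i) := by
      intro e he
      rw [Finsupp.linearCombination_apply, Finsupp.sum_of_support_subset e he _ (by simp),
        Finsupp.finsetSum_apply, ← Finset.add_sum_erase A _ (Finset.mem_insert_self _ _)]
      simp [smul_eq_mul]
    have hrest : ∑ j ∈ A.erase i, d j * t j (ι i) = ∑ j ∈ A.erase i, d' j * t j (ι i) := by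
      refine Finset.sum_congr rfl fun j hj => ?_
      by_cases hji : t j (ι i) = 0
      · simp [hji]
      · rw [ih (ρ j) (hρ ▸ htri i j (Finset.ne_of_mem_erase hj) hji) j rfl]
    have := DFunLike.congr_fun hdd (ι i)
    rw [hcoord d (fun j hj => by simp [A, hj]), hcoord d' (fun j hj => by simp [A, hj]),
      hrest] at this
    exact Nat.eq_of_mul_eq_mul_right (Nat.pos_of_ne_zero (hdiag i)) (Nat.add_right_cancel this)

theorem MvPolynomial.aeval_monomial_family {σ τ K : Type*} [CommSemiring K] (t : σ → τ →₀ ℕ)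
    (ε : σ → K) (d : σ →₀ ℕ) (c : K) :
    aeval (fun i => (monomial (t i) (ε i) : MvPolynomial τ K)) (monomial d c) =
      monomial (Finsupp.linearCombination ℕ t d) (c * d.prod fun i k => ε i ^ k) := by
  rw [aeval_monomial, algebraMap_eq, Finsupp.linearCombination_apply, Finsupp.prod, Finsupp.prod,
    Finset.prod_congr rfl fun i _ => monomial_pow, ← monomial_sum_prod, C_mul_monomial]
  rfl

theorem MvPolynomial.algebraicIndependent_monomial {σ τ K : Type*} [Field K] {t : σ → τ →₀ ℕ}
    {ε : σ → K} (hε : ∀ i, ε i ≠ 0) (ht : Function.Injective (Finsupp.linearCombination ℕ t)) :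
    AlgebraicIndependent K fun i => (monomial (t i) (ε i) : MvPolynomial τ K) := by
  classical
  rw [algebraicIndependent_iff]
  intro p hp
  ext d₀
  by_contra hd₀
  have hcoeff := congrArg (coeff (Finsupp.linearCombination ℕ t d₀)) hp
  rw [p.as_sum, map_sum, coeff_sum, coeff_zero,
    Finset.sum_eq_single d₀ (fun d _ hd => by
      rw [aeval_monomial_family, coeff_monomial, if_neg (ht.ne hd)])
      (fun h => absurd (mem_support_iff.2 hd₀) h),
    aeval_monomial_family, coeff_monomial, if_pos rfl] at hcoeff
  exact mul_ne_zero hd₀ (Finsupp.prod_ne_zero_iff.2 fun i _ => pow_ne_zero _ (hε i)) hcoeff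

theorem minorDet_image_fst_snd {n : ℕ} {A : Type} [CommRing A] (X : Matrix (Fin n) (Fin n) A)
    {T : Finset (Fin n × Fin n)} (h₁ : Set.InjOn Prod.fst (T : Set (Fin n × Fin n)))
    (h₂ : Set.InjOn Prod.snd (T : Set (Fin n × Fin n))) :
    ∃ u : ℤˣ, minorDet X (T.image Prod.fst) (T.image Prod.snd) =
      u • (Matrix.of fun τ η : T => X τ.1.1 η.1.2).det := by
  set I := T.image Prod.fst
  set J := T.image Prod.snd
  have hI : I.card = T.card := Finset.card_image_of_injOn h₁
  have hJI : J.card = I.card := (Finset.card_image_of_injOn h₂).trans hI.symm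
  let eR : T ≃ Fin I.card := Equiv.ofBijective
    (fun τ => (I.orderIsoOfFin rfl).symm ⟨τ.1.1, Finset.mem_image_of_mem _ τ.2⟩)
    ((Fintype.bijective_iff_injective_and_card _).2 ⟨fun τ η h => Subtype.ext
      (h₁ τ.2 η.2 (congrArg Subtype.val ((I.orderIsoOfFin rfl).symm.injective h))), by simp [hI]⟩)
  let eC : T ≃ Fin I.card := Equiv.ofBijective
    (fun τ => (J.orderIsoOfFin hJI).symm ⟨τ.1.2, Finset.mem_image_of_mem _ τ.2⟩)
    ((Fintype.bijective_iff_injective_and_card _).2 ⟨fun τ η h => Subtype.ext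
      (h₂ τ.2 η.2 (congrArg Subtype.val ((J.orderIsoOfFin hJI).symm.injective h))), by simp [hI]⟩)
  set M := Matrix.of fun p q : Fin I.card =>
    X (I.orderIsoOfFin rfl p).1 (J.orderIsoOfFin hJI q).1
  have hN : (Matrix.of fun τ η : T => X τ.1.1 η.1.2) = M.reindex eR.symm eC.symm := by
    ext τ η
    simp only [M, eR, eC, Matrix.reindex_apply, Equiv.symm_symm, Matrix.submatrix_apply,
      Matrix.of_apply, Equiv.ofBijective_apply, OrderIso.apply_symm_apply]
  refine ⟨Equiv.Perm.sign (eC.symm.trans eR), ?_⟩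
  rw [minorDet, dif_pos hJI, hN, Matrix.det_reindex, Equiv.symm_symm, Units.smul_def, zsmul_eq_mul,
    ← mul_assoc, ← Int.cast_mul, ← Units.val_mul, Int.units_mul_self, Units.val_one, Int.cast_one,
    one_mul]

section BaseCombinatorics

variable {n s : ℕ} {r : ℕ → ℕ} {S : Finset (Fin n × Fin n)}

theorem IsBase.eq_of_fst_eq (hS : IsBase (Mset r s n) S) {ξ η : Fin n × Fin n} (hξ : ξ ∈ S)
    (hη : η ∈ S) (h : ξ.1 = η.1) : ξ = η := by
  by_contra hne
  rcases lt_trichotomy ξ.2 η.2 with h2 | h2 | h2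
  · exact (hS.2.1 ξ hξ η hη hne).2 (Or.inl ⟨h.symm, h2⟩)
  · exact hne (Prod.ext h h2)
  · exact (hS.2.1 ξ hξ η hη hne).1 (Or.inl ⟨h, h2⟩)

theorem IsBase.eq_of_snd_eq (hS : IsBase (Mset r s n) S) {ξ η : Fin n × Fin n} (hξ : ξ ∈ S)
    (hη : η ∈ S) (h : ξ.2 = η.2) : ξ = η := by
  by_contra hne
  rcases lt_trichotomy ξ.1 η.1 with h1 | h1 | h1
  · exact (hS.2.1 ξ hξ η hη hne).1 (Or.inr ⟨h, h1⟩)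
  · exact hne (Prod.ext h1 h)
  · exact (hS.2.1 ξ hξ η hη hne).2 (Or.inr ⟨h.symm, h1⟩)

/-- `(a, ξ.2) ∈ M ∖ S` exceeds an element of `S`, which by incomparability with `ξ` lies in
row `a`. -/
theorem IsBase.exists_mem_fst_eq (hS : IsBase (Mset r s n) S) {ξ : Fin n × Fin n} (hξ : ξ ∈ S)
    {a : Fin n} (h₁ : ξ.1 < a) (h₂ : blockOf r s a < blockOf r s ξ.2) :
    ∃ η ∈ S, η.1 = a ∧ η.2 < ξ.2 := by
  have hM : (a, ξ.2) ∈ Mset r s n := Finset.mem_filter.2 ⟨Finset.mem_univ _, h₂⟩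
  have hnotS : (a, ξ.2) ∉ S := fun hmem =>
    (hS.eq_of_snd_eq hmem hξ rfl ▸ h₁).false
  obtain ⟨η, hη, ⟨hrow, hcol⟩ | ⟨hcol, hrow⟩⟩ := hS.2.2 _ hM hnotS
  · exact ⟨η, hη, hrow.symm, hcol⟩
  · have := hS.eq_of_snd_eq hη hξ hcol.symm
    subst this
    exact absurd (h₁.trans hrow) (lt_irrefl _)

theorem mem_PhiSet {p : Fin n × Fin n} :
    p ∈ PhiSet r s n S ↔ ∃ ζ ∈ S, ∃ ζ' ∈ S, inDr r s (ζ.2, ζ'.1) ∧ p = (ζ.2, ζ'.2) := by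
  simp only [PhiSet, Finset.mem_image, Finset.mem_filter, Finset.mem_product]
  constructor
  · rintro ⟨q, ⟨⟨hζ, hζ'⟩, hd⟩, rfl⟩
    exact ⟨q.1, hζ, q.2, hζ', hd, rfl⟩
  · rintro ⟨ζ, hζ, ζ', hζ', hd, rfl⟩
    exact ⟨(ζ, ζ'), ⟨⟨hζ, hζ'⟩, hd⟩, rfl⟩

theorem IsBase.PhiSet_subset (hS : IsBase (Mset r s n) S) : PhiSet r s n S ⊆ Mset r s n := by
  intro p hp
  obtain ⟨ζ, -, ζ', hζ', ⟨-, hblock⟩, rfl⟩ := mem_PhiSet.1 hp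
  have h' := (Finset.mem_filter.1 (hS.1 hζ')).2
  exact Finset.mem_filter.2 ⟨Finset.mem_univ _, by simp only at hblock h' ⊢; omega⟩

theorem IsBase.notMem_PhiSet (hS : IsBase (Mset r s n) S) {p : Fin n × Fin n} (hp : p ∈ S) :
    p ∉ PhiSet r s n S := by
  intro hΦ
  obtain ⟨ζ, -, ζ', hζ', ⟨hlt, -⟩, rfl⟩ := mem_PhiSet.1 hΦ
  have := hS.eq_of_snd_eq hp hζ' rfl
  rw [← this] at hlt
  exact lt_irrefl _ hlt

theorem IsBase.union_PhiSet_subset (hS : IsBase (Mset r s n) S) :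
    S ∪ PhiSet r s n S ⊆ Mset r s n :=
  Finset.union_subset hS.1 hS.PhiSet_subset

theorem IsBase.notMem_of_snd_lt (hS : IsBase (Mset r s n) S) {τ : Fin n × Fin n} {c : Fin n}
    (hτ : τ ∈ S) (hc : τ.2 < c) : (τ.1, c) ∉ S ∪ PhiSet r s n S := by
  rintro hmem
  rcases Finset.mem_union.1 hmem with h | h
  · exact (hS.eq_of_fst_eq h hτ rfl ▸ hc).false
  · obtain ⟨ζ, -, ζ', hζ', ⟨hlt, hblock⟩, he⟩ := mem_PhiSet.1 h
    obtain ⟨h1, rfl⟩ := Prod.mk.inj he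
    obtain ⟨η, hη, hη1, hη2⟩ := hS.exists_mem_fst_eq hτ (a := ζ'.1) (h1 ▸ hlt) (by
      have h' := (Finset.mem_filter.1 (hS.1 hτ)).2
      rw [h1] at h'
      simp only at hblock h' ⊢
      omega)
    rw [hS.eq_of_fst_eq hη hζ' hη1] at hη2
    exact lt_asymm hc hη2

/-- The set `{γ} ∪ S_γ`; the rows and columns of `M_γ` are its first and second projections. -/
def minorRoots (S : Finset (Fin n × Fin n)) (γ : Fin n × Fin n) : Finset (Fin n × Fin n) :=
  insert γ (S.filter fun p => γ.1 < p.1 ∧ p.2 < γ.2)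

theorem mem_minorRoots_iff_of_notMem {γ p : Fin n × Fin n} (hp : p ∉ S) :
    p ∈ minorRoots S γ ↔ p = γ := by
  simp only [minorRoots, Finset.mem_insert, Finset.mem_filter]
  tauto

theorem Mminor_eq_minorDet_s6 (K : Type) [Field K] (γ : Fin n × Fin n) :
    Mminor K r s n S γ = minorDet (Xmat K r s n)
      ((minorRoots S γ).image Prod.fst) ((minorRoots S γ).image Prod.snd) := by
  simp only [Mminor, minorRoots, Finset.image_insert]

theorem IsBase.injOn_fst_minorRoots (hS : IsBase (Mset r s n) S) (γ : Fin n × Fin n) :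
    Set.InjOn Prod.fst (minorRoots S γ : Set (Fin n × Fin n)) := by
  intro τ hτ η hη h
  simp only [Finset.mem_coe, minorRoots, Finset.mem_insert, Finset.mem_filter] at hτ hη
  rcases hτ with rfl | hτ <;> rcases hη with rfl | hη
  · rfl
  · exact absurd hη.2.1 (h ▸ lt_irrefl _)
  · exact absurd hτ.2.1 (h ▸ lt_irrefl _)
  · exact hS.eq_of_fst_eq hτ.1 hη.1 h

theorem IsBase.injOn_snd_minorRoots (hS : IsBase (Mset r s n) S) (γ : Fin n × Fin n) :
    Set.InjOn Prod.snd (minorRoots S γ : Set (Fin n × Fin n)) := by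
  intro τ hτ η hη h
  simp only [Finset.mem_coe, minorRoots, Finset.mem_insert, Finset.mem_filter] at hτ hη
  rcases hτ with rfl | hτ <;> rcases hη with rfl | hη
  · rfl
  · exact absurd hη.2.2 (h ▸ lt_irrefl _)
  · exact absurd hτ.2.2 (h ▸ lt_irrefl _)
  · exact hS.eq_of_snd_eq hτ.1 hη.1 h

theorem IsBase.fst_le_of_mem_minorRoots (hS : IsBase (Mset r s n) S) {γ τ η : Fin n × Fin n}
    (hτ : τ ∈ minorRoots S γ) (hη : η ∈ minorRoots S γ)
    (hY : (τ.1, η.2) ∈ S ∪ PhiSet r s n S) : τ.1 ≤ η.1 := by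
  simp only [minorRoots, Finset.mem_insert, Finset.mem_filter] at hτ hη
  rcases hη with rfl | ⟨hηS, -⟩
  · rcases hτ with rfl | ⟨hτS, -, hτ2⟩
    · exact le_rfl
    · exact absurd hY (hS.notMem_of_snd_lt hτS hτ2)
  · rcases Finset.mem_union.1 hY with h | h
    · exact (congrArg Prod.fst (hS.eq_of_snd_eq h hηS rfl)).le
    · obtain ⟨ζ, -, ζ', hζ', ⟨hlt, -⟩, he⟩ := mem_PhiSet.1 h
      obtain ⟨h1, h2⟩ := Prod.mk.inj he
      rw [h1, hS.eq_of_snd_eq hηS hζ' h2]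
      exact hlt.le

theorem minorRoots_subset {γ : Fin n × Fin n} (hγ : γ ∈ S ∪ PhiSet r s n S) :
    minorRoots S γ ⊆ S ∪ PhiSet r s n S :=
  Finset.insert_subset hγ ((Finset.filter_subset _ _).trans Finset.subset_union_left)

end BaseCombinatorics

noncomputable def yVar (K : Type) [Field K] (r : ℕ → ℕ) (s n : ℕ) (S : Finset (Fin n × Fin n))
    (p : Fin n × Fin n) :
    MvPolynomial {p : Fin n × Fin n // p ∈ S ∪ PhiSet r s n S} K :=
  if h : p ∈ S ∪ PhiSet r s n S then X ⟨p, h⟩ else 0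

noncomputable def yExp (r : ℕ → ℕ) (s n : ℕ) (S : Finset (Fin n × Fin n))
    (p : Fin n × Fin n) : {p : Fin n × Fin n // p ∈ S ∪ PhiSet r s n S} →₀ ℕ :=
  if h : p ∈ S ∪ PhiSet r s n S then Finsupp.single ⟨p, h⟩ 1 else 0

noncomputable def minorExp (r : ℕ → ℕ) (s n : ℕ) (S : Finset (Fin n × Fin n))
    (γ : Fin n × Fin n) :
    {p : Fin n × Fin n // p ∈ S ∪ PhiSet r s n S} →₀ ℕ :=
  ∑ τ ∈ minorRoots S γ, yExp r s n S τ

section Restriction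

variable {K : Type} [Field K] {n s : ℕ} {r : ℕ → ℕ} {S : Finset (Fin n × Fin n)}

theorem yVar_eq_monomial {p : Fin n × Fin n} (hp : p ∈ S ∪ PhiSet r s n S) :
    yVar K r s n S p = monomial (yExp r s n S p) 1 := by
  rw [yVar, yExp, dif_pos hp, dif_pos hp, X]

theorem minorExp_apply (γ : Fin n × Fin n) (x : {p : Fin n × Fin n // p ∈ S ∪ PhiSet r s n S}) :
    minorExp r s n S γ x = if x.1 ∈ minorRoots S γ then 1 else 0 := by
  have hyExp : ∀ τ, yExp r s n S τ x = if τ = x.1 then 1 else 0 := by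
    intro τ
    by_cases hτ : τ ∈ S ∪ PhiSet r s n S
    · simp [yExp, hτ, Finsupp.single_apply, Subtype.ext_iff]
    · simp [yExp, hτ, show τ ≠ x.1 from fun h => hτ (h ▸ x.2)]
  simp [minorExp, Finsupp.finsetSum_apply, hyExp]

theorem IsBase.restrictY_Xmat (hS : IsBase (Mset r s n) S) (i j : Fin n) :
    restrictY K r s n S (Xmat K r s n i j) = yVar K r s n S (i, j) := by
  by_cases hM : (i, j) ∈ Mset r s n
  · simp [Xmat, hM, restrictY, yVar]
  · have hY : (i, j) ∉ S ∪ PhiSet r s n S := fun h => hM (hS.union_PhiSet_subset h)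
    simp [Xmat, hM, yVar, hY]

theorem IsBase.exists_restrictY_Mminor_eq_det (hS : IsBase (Mset r s n) S) (γ : Fin n × Fin n) :
    ∃ u : ℤˣ, restrictY K r s n S (Mminor K r s n S γ) =
      u • (Matrix.of fun τ η : minorRoots S γ => yVar K r s n S (τ.1.1, η.1.2)).det := by
  obtain ⟨u, hu⟩ := minorDet_image_fst_snd (Xmat K r s n)
    (hS.injOn_fst_minorRoots γ) (hS.injOn_snd_minorRoots γ)
  refine ⟨u, ?_⟩
  rw [Mminor_eq_minorDet_s6, hu, Units.smul_def, map_zsmul, AlgHom.map_det]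
  congr 2
  exact Matrix.ext fun τ η => hS.restrictY_Xmat τ.1.1 η.1.2

theorem IsBase.exists_restrictY_Mminor_eq_monomial (hS : IsBase (Mset r s n) S)
    {γ : Fin n × Fin n} (hγ : γ ∈ S ∪ PhiSet r s n S) :
    ∃ ε : K, ε ≠ 0 ∧ restrictY K r s n S (Mminor K r s n S γ) =
      monomial (minorExp r s n S γ) ε := by
  obtain ⟨u, hu⟩ := hS.exists_restrictY_Mminor_eq_det (K := K) γ
  have htri : (Matrix.of fun τ η : minorRoots S γ => yVar K r s n S (τ.1.1, η.1.2)).BlockTriangular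
      fun τ => τ.1.1 := by
    intro τ η hlt
    by_contra hne
    have hY : (τ.1.1, η.1.2) ∈ S ∪ PhiSet r s n S := by
      by_contra hY
      exact hne (by rw [Matrix.of_apply, yVar, dif_neg hY])
    exact absurd hlt (not_lt.2 (hS.fst_le_of_mem_minorRoots τ.2 η.2 hY))
  have hinj : Function.Injective fun τ : minorRoots S γ => τ.1.1 := fun τ η h =>
    Subtype.ext (hS.injOn_fst_minorRoots γ τ.2 η.2 h)
  refine ⟨((u : ℤ) : K), ((Int.castRingHom K).isUnit_map u.isUnit).ne_zero, ?_⟩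
  rw [hu, htri.det_of_injective hinj]
  simp only [Matrix.of_apply, Prod.mk.eta]
  rw [Finset.prod_coe_sort (minorRoots S γ) (yVar K r s n S),
    Finset.prod_congr rfl fun τ hτ => yVar_eq_monomial (minorRoots_subset hγ hτ),
    ← monomial_sum_one, minorExp, Units.smul_def, ← Int.cast_smul_eq_zsmul K, smul_monomial,
    smul_eq_mul, mul_one]

theorem IsBase.restrictY_Mminor_eq_zero (hS : IsBase (Mset r s n) S) {γ : Fin n × Fin n}
    (hγ : γ ∉ S ∪ PhiSet r s n S) : restrictY K r s n S (Mminor K r s n S γ) = 0 := by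
  obtain ⟨u, hu⟩ := hS.exists_restrictY_Mminor_eq_det (K := K) γ
  rw [hu, Matrix.det_eq_zero_of_column_eq_zero ⟨γ, Finset.mem_insert_self _ _⟩, smul_zero]
  rintro ⟨τ, hτ⟩
  simp only [minorRoots, Finset.mem_insert, Finset.mem_filter] at hτ
  rcases hτ with rfl | ⟨hτS, -, hτ2⟩
  · rw [Matrix.of_apply, yVar, dif_neg hγ]
  · rw [Matrix.of_apply, yVar, dif_neg (hS.notMem_of_snd_lt hτS hτ2)]

theorem IsBase.exists_restrictY_Lpoly_eq_monomial (hS : IsBase (Mset r s n) S)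
    {ξ ξ' : Fin n × Fin n} (hξ : ξ ∈ S) (hξ' : ξ' ∈ S) (hd : inDr r s (ξ.2, ξ'.1)) :
    ∃ ε : K, ε ≠ 0 ∧ restrictY K r s n S (Lpoly K r s n S ξ ξ') =
      monomial (minorExp r s n S ξ + minorExp r s n S (ξ.2, ξ'.2)) ε := by
  have hφ : (ξ.2, ξ'.2) ∈ S ∪ PhiSet r s n S :=
    Finset.mem_union_right _ (mem_PhiSet.2 ⟨ξ, hξ, ξ', hξ', hd, rfl⟩)
  obtain ⟨ε₁, hε₁, h₁⟩ := hS.exists_restrictY_Mminor_eq_monomial (K := K)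
    (Finset.mem_union_left _ hξ)
  obtain ⟨ε₂, hε₂, h₂⟩ := hS.exists_restrictY_Mminor_eq_monomial (K := K) hφ
  refine ⟨ε₁ * ε₂, mul_ne_zero hε₁ hε₂, ?_⟩
  -- Only the summand with `α₁ = 0` survives: `ξ + α₁` lies to the right of `ξ ∈ S` in its row.
  rw [Lpoly, map_sum, Finset.sum_eq_single_of_mem ξ.2
    (Finset.mem_filter.2 ⟨Finset.mem_univ _, Or.inl rfl, Or.inr hd⟩)]
  · rw [map_mul, Prod.mk.eta, h₁, h₂, monomial_mul]
  · intro m hm hne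
    have hdm : inDr r s (ξ.2, m) := (Finset.mem_filter.1 hm).2.1.resolve_left hne
    rw [map_mul, hS.restrictY_Mminor_eq_zero (hS.notMem_of_snd_lt hξ hdm.1), zero_mul]

end Restriction

abbrev AdmissiblePair (r : ℕ → ℕ) (s n : ℕ) (S : Finset (Fin n × Fin n)) : Type :=
  {q : (Fin n × Fin n) × (Fin n × Fin n) // q.1 ∈ S ∧ q.2 ∈ S ∧ inDr r s (q.1.2, q.2.1)}

noncomputable def extendedExp (r : ℕ → ℕ) (s n : ℕ) (S : Finset (Fin n × Fin n)) :
    {p : Fin n × Fin n // p ∈ S} ⊕ AdmissiblePair r s n S →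
      ({p : Fin n × Fin n // p ∈ S ∪ PhiSet r s n S} →₀ ℕ) :=
  Sum.elim (fun ξ => minorExp r s n S ξ.1)
    fun q => minorExp r s n S q.1.1 + minorExp r s n S (q.1.1.2, q.1.2.2)

section ExtendedExponents

variable {n s : ℕ} {r : ℕ → ℕ} {S : Finset (Fin n × Fin n)}

theorem AdmissiblePair.root_mem_PhiSet (q : AdmissiblePair r s n S) :
    (q.1.1.2, q.1.2.2) ∈ PhiSet r s n S :=
  mem_PhiSet.2 ⟨_, q.2.1, _, q.2.2.1, q.2.2.2, rfl⟩

theorem minorExp_ne_zero_iff {γ : Fin n × Fin n}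
    {x : {p : Fin n × Fin n // p ∈ S ∪ PhiSet r s n S}} :
    minorExp r s n S γ x ≠ 0 ↔ x.1 ∈ minorRoots S γ := by
  rw [minorExp_apply]
  split_ifs with h <;> simp [h]

theorem IsBase.linearCombination_extendedExp_injective (hS : IsBase (Mset r s n) S) :
    Function.Injective (Finsupp.linearCombination ℕ (extendedExp r s n S)) := by
  -- Leading variables `x_ξ` and `x_φ`; the `L`'s come first, then the minors by decreasing width.
  refine Finsupp.linearCombination_nat_injective_of_triangular _
    (Sum.elim (fun ξ => ⟨ξ.1, Finset.mem_union_left _ ξ.2⟩)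
      fun q => ⟨_, Finset.mem_union_right _ q.root_mem_PhiSet⟩)
    (Sum.elim (fun ξ => n + ξ.1.1 - ξ.1.2) fun _ => 0) ?_ ?_
  · rintro (ξ | q) <;> simp [extendedExp, minorExp_ne_zero_iff, minorRoots]
  · rintro (ξ | q) j hne hj
    · rcases j with ζ | q
      · have hmem : ξ.1 ∈ minorRoots S ζ.1 := minorExp_ne_zero_iff.1 hj
        simp only [minorRoots, Finset.mem_insert, Finset.mem_filter] at hmem
        rcases hmem with h | ⟨-, h₁, h₂⟩
        · exact absurd (congrArg Sum.inl (Subtype.ext h.symm)) hne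
        have := ζ.1.2.isLt
        simp only [Sum.elim_inl, Fin.lt_def] at h₁ h₂ ⊢
        omega
      · have := ξ.1.2.isLt
        simp only [Sum.elim_inl, Sum.elim_inr]
        omega
    · have hroot : (q.1.1.2, q.1.2.2) ∉ S := fun h => hS.notMem_PhiSet h q.root_mem_PhiSet
      rcases j with ζ | q'
      · have := (mem_minorRoots_iff_of_notMem hroot).1 (minorExp_ne_zero_iff.1 hj)
        exact absurd (this ▸ ζ.2) hroot
      · simp only [extendedExp, Sum.elim_inr, Finsupp.add_apply, ne_eq, Nat.add_eq_zero_iff,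
          not_and_or] at hj
        rcases hj with h | h <;>
          have h := (mem_minorRoots_iff_of_notMem hroot).1 (minorExp_ne_zero_iff.1 h)
        · exact absurd (h ▸ q'.2.1) hroot
        · obtain ⟨h₁, h₂⟩ := Prod.mk.inj h
          exact absurd (congrArg Sum.inr (Subtype.ext (Prod.ext
            (hS.eq_of_snd_eq q'.2.1 q.2.1 h₁.symm) (hS.eq_of_snd_eq q'.2.2.1 q.2.2.1 h₂.symm)))) hne

end ExtendedExponents

theorem statement6_general (K : Type) [Field K]
    (n s : ℕ) (r : ℕ → ℕ)
    (S : Finset (Fin n × Fin n)) (hS : IsBase (Mset r s n) S) :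
    AlgebraicIndependent K (Sum.elim
      (fun ξ : {p : Fin n × Fin n // p ∈ S} =>
        restrictY K r s n S (Mminor K r s n S ξ.1))
      (fun q : {q : (Fin n × Fin n) × (Fin n × Fin n) //
          q.1 ∈ S ∧ q.2 ∈ S ∧ inDr r s (q.1.2, q.2.1)} =>
        restrictY K r s n S (Lpoly K r s n S q.1.1 q.1.2))) := by
  have hmonomial : ∀ i, ∃ ε : K, ε ≠ 0 ∧
      Sum.elim (fun ξ : {p : Fin n × Fin n // p ∈ S} => restrictY K r s n S (Mminor K r s n S ξ.1))
        (fun q : AdmissiblePair r s n S => restrictY K r s n S (Lpoly K r s n S q.1.1 q.1.2)) i =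
        monomial (extendedExp r s n S i) ε := by
    rintro (ξ | q)
    · exact hS.exists_restrictY_Mminor_eq_monomial (Finset.mem_union_left _ ξ.2)
    · exact hS.exists_restrictY_Lpoly_eq_monomial q.2.1 q.2.2.1 q.2.2.2
  choose ε hε hf using hmonomial
  rw [funext hf]
  exact algebraicIndependent_monomial hε hS.linearCombination_extendedExp_injective

/-- the restrictions to `Y` of the invariants of the extended base,
`{M_ξ|_Y : ξ ∈ S} ∪ {L_φ|_Y : φ ∈ Φ}`, are algebraically independent over `K`. -/
theorem statement6 (K : Type) [Field K] [IsAlgClosed K] [CharZero K]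
    (n s : ℕ) (r : ℕ → ℕ) (hpos : ∀ k < s, 0 < r k) (hsum : Rsum r s = n)
    (S : Finset (Fin n × Fin n)) (hS : IsBase (Mset r s n) S) :
    AlgebraicIndependent K (Sum.elim
      (fun ξ : {p : Fin n × Fin n // p ∈ S} =>
        restrictY K r s n S (Mminor K r s n S ξ.1))
      (fun q : {q : (Fin n × Fin n) × (Fin n × Fin n) //
          q.1 ∈ S ∧ q.2 ∈ S ∧ inDr r s (q.1.2, q.2.1)} =>
        restrictY K r s n S (Lpoly K r s n S q.1.1 q.1.2))) :=
  statement6_general K n s r S hS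
end
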